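/- arXiv:math/0311314 — 2 statements merged into one kernel-verified Lean document; each statement's English description precedes it below -/
import Mathlib

section
/- Let ℓ be a positive integer, τ ∈ ℍ, and ν, μ ∈ ℂ with ν+μ ∉ ℤτ+ℤ. Then for every integer n ≥ 1: K_ℓ(τ, ν − (n/ℓ)τ, μ + (n/ℓ)τ) = e^{2iπ n(ν+μ)} K_ℓ(τ, ν, μ) + Σ_{r=1}^{n} e^{2iπ(n−r)(ν+μ)} ϑ(ℓτ, ℓν − rτ), and for every integer n ≤ −1: K_ℓ(τ, ν − (n/ℓ)τ, μ + (n/ℓ)τ) = e^{2iπ n(ν+μ)} K_ℓ(τ, ν, μ) − Σ_{r=n+1}^{0} e^{2iπ(n−r)(ν+μ)} ϑ(ℓτ, ℓν − rτ). -/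
open Complex Real MeasureTheory Finset

noncomputable def appellK (ℓ : ℕ) (τ ν μ : ℂ) : ℂ :=
  ∑' m : ℤ,
    Complex.exp ((π : ℂ) * I * (m : ℂ) ^ 2 * ℓ * τ +
        2 * (π : ℂ) * I * (m : ℂ) * ℓ * ν) /
      (1 - Complex.exp (2 * (π : ℂ) * I * (ν + μ + (m : ℂ) * τ)))

noncomputable def theta (τ ν : ℂ) : ℂ :=
  ∑' m : ℤ, Complex.exp ((π : ℂ) * I * (m : ℂ) ^ 2 * τ + 2 * (π : ℂ) * I * (m : ℂ) * ν)

noncomputable def PhiFun (τ μ : ℂ) : ℂ :=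
  -I / (2 * (-I * τ) ^ (1/2 : ℂ)) -
    (1/2) * ∫ x : ℝ, Complex.exp (-(π : ℂ) * (x : ℂ) ^ 2) *
      (Complex.sinh ((π : ℂ) * (x : ℂ) * (-I * τ) ^ (1/2 : ℂ) * (1 + 2 * μ / τ)) /
       Complex.sinh ((π : ℂ) * (x : ℂ) * (-I * τ) ^ (1/2 : ℂ)))

noncomputable def theta10 (τ ν : ℂ) : ℂ :=
  ∑' m : ℤ, Complex.exp ((π : ℂ) * I * ((m : ℂ) ^ 2 - (m : ℂ)) * τ - 2 * (π : ℂ) * I * (m : ℂ) * ν)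

noncomputable def theta11 (τ ν : ℂ) : ℂ :=
  ∑' m : ℤ, (-1 : ℂ) ^ m *
    Complex.exp ((π : ℂ) * I * ((m : ℂ) ^ 2 - (m : ℂ)) * τ - 2 * (π : ℂ) * I * (m : ℂ) * ν)

noncomputable def etaF (τ : ℂ) : ℂ :=
  Complex.exp ((π : ℂ) * I * τ / 12) * ∏' m : ℕ, (1 - Complex.exp (2 * (π : ℂ) * I * ((m : ℂ) + 1) * τ))

noncomputable def thetaHL (r : ℤ) (ℓ : ℕ) (τ ν : ℂ) : ℂ :=
  ∑' n : ℤ, Complex.exp (2 * (π : ℂ) * I * ℓ *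
    ((((n : ℂ) + (r : ℂ) / (2 * ℓ)) ^ 2) * τ + ((n : ℂ) + (r : ℂ) / (2 * ℓ)) * ν))

noncomputable def zetaCD (c d : ℤ) : ℂ :=
  if Even c then Complex.exp ((π : ℂ) * I * ((d : ℂ) - 1) / 4) * (jacobiSym c d.natAbs : ℂ)
  else Complex.exp (-(π : ℂ) * I * (c : ℂ) / 4) * (jacobiSym d c.natAbs : ℂ)

/-! Along the antidiagonal shift `(ν, μ) ↦ (ν - xτ/ℓ, μ + xτ/ℓ)` the denominators
`1 - e^{2πi(ν+μ+mτ)}` of `K_ℓ` do not move, while the numerators are the terms of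
`ϑ(ℓτ, ℓν - xτ)`; lowering `x` by one multiplies the `m`-th of them by `e^{2πimτ}`. So
`e^{2πi(ν+μ)}` times the `m`-th term at `x - 1` is the `m`-th term at `x` times
`e^{2πi(ν+μ+mτ)}`, and the value at `x` minus `e^{2πi(ν+μ)}` times the value at `x - 1` is
`ϑ(ℓτ, ℓν - xτ)`. Unrolling this first-order recurrence upwards or downwards from `x = 0` gives
the two formulas. The series converge absolutely because `|1 - e^{2πi(ν+μ+mτ)}| ≥ 1/2` for all
but finitely many `m`. -/

open Filter Topology

lemma one_sub_cexp_ne_zero {τ w : ℂ} (h : ∀ m n : ℤ, w ≠ m * τ + n) (m : ℤ) :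
    1 - cexp (2 * π * I * (w + m * τ)) ≠ 0 := by
  rw [sub_ne_zero, ne_comm, Ne, Complex.exp_eq_one_iff]
  rintro ⟨n, hn⟩
  have hw : w + m * τ = n := mul_left_cancel₀ two_pi_I_ne_zero (hn.trans (mul_comm _ _))
  exact h (-m) n (by push_cast; linear_combination hw)

lemma eventually_half_le_norm_one_sub_cexp {τ : ℂ} (hτ : 0 < τ.im) (w : ℂ) :
    ∀ᶠ m : ℤ in cofinite, 1 / 2 ≤ ‖1 - cexp (2 * π * I * (w + m * τ))‖ := by
  have hre (m : ℤ) : (2 * π * I * (w + m * τ)).re = -2 * π * w.im + -2 * π * τ.im * m := by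
    simp only [mul_re, re_ofNat, ofReal_re, im_ofNat, ofReal_im, mul_zero, sub_zero, I_re, mul_im,
      zero_mul, add_zero, I_im, mul_one, sub_self, add_re, intCast_re, intCast_im, add_im, zero_sub,
      neg_mul]
    ring
  have hslope : -2 * π * τ.im < 0 := by nlinarith [pi_pos]
  rw [Int.cofinite_eq, eventually_sup]
  constructor
  · have hlim : Tendsto (fun m : ℤ ↦ ‖cexp (2 * π * I * (w + m * τ))‖) atBot atTop := by
      simp only [Complex.norm_exp, hre]
      exact tendsto_exp_atTop.comp <| tendsto_atTop_add_const_left _ _ <|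
        (tendsto_intCast_atBot_iff.2 tendsto_id).const_mul_atBot_of_neg hslope
    filter_upwards [hlim.eventually_ge_atTop (3 / 2)] with m hm
    calc (1 : ℝ) / 2 ≤ ‖cexp (2 * π * I * (w + m * τ))‖ - ‖(1 : ℂ)‖ := by rw [norm_one]; linarith
      _ ≤ ‖1 - cexp (2 * π * I * (w + m * τ))‖ := by rw [norm_sub_rev]; exact norm_sub_norm_le _ _
  · have hlim : Tendsto (fun m : ℤ ↦ ‖cexp (2 * π * I * (w + m * τ))‖) atTop (𝓝 0) := by
      simp only [Complex.norm_exp, hre]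
      exact tendsto_exp_atBot.comp <| tendsto_atBot_add_const_left _ _ <|
        tendsto_intCast_atTop_atTop.const_mul_atTop_of_neg hslope
    filter_upwards [hlim.eventually_le_const (by norm_num : (0 : ℝ) < 1 / 2)] with m hm
    calc (1 : ℝ) / 2 ≤ ‖(1 : ℂ)‖ - ‖cexp (2 * π * I * (w + m * τ))‖ := by rw [norm_one]; linarith
      _ ≤ ‖1 - cexp (2 * π * I * (w + m * τ))‖ := norm_sub_norm_le _ _

lemma summable_jacobiTheta₂_term_div_one_sub_cexp {T τ : ℂ} (hT : 0 < T.im) (hτ : 0 < τ.im)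
    (z w : ℂ) :
    Summable fun m : ℤ ↦ jacobiTheta₂_term m z T / (1 - cexp (2 * π * I * (w + m * τ))) := by
  refine .of_norm_bounded_eventually
    (((summable_jacobiTheta₂_term_iff z T).2 hT).norm.mul_left 2) ?_
  filter_upwards [eventually_half_le_norm_one_sub_cexp hτ w] with m hm
  rw [norm_div, div_le_iff₀ (by linarith)]
  nlinarith [norm_nonneg (jacobiTheta₂_term m z T)]

lemma tsum_jacobiTheta₂_term_div_one_sub_cexp {T τ w : ℂ} (hT : 0 < T.im) (hτ : 0 < τ.im)
    (h : ∀ m n : ℤ, w ≠ m * τ + n) (z : ℂ) :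
    ∑' m : ℤ, jacobiTheta₂_term m z T / (1 - cexp (2 * π * I * (w + m * τ))) =
      cexp (2 * π * I * w) *
          ∑' m : ℤ, jacobiTheta₂_term m (z + τ) T / (1 - cexp (2 * π * I * (w + m * τ))) +
        jacobiTheta₂ z T := by
  rw [← tsum_mul_left, jacobiTheta₂, ← Summable.tsum_add
    ((summable_jacobiTheta₂_term_div_one_sub_cexp hT hτ _ w).mul_left _)
    ((summable_jacobiTheta₂_term_iff z T).2 hT)]
  refine tsum_congr fun m ↦ ?_
  have hshift : cexp (2 * π * I * w) * jacobiTheta₂_term m (z + τ) T =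
      jacobiTheta₂_term m z T * cexp (2 * π * I * (w + m * τ)) := by
    simp only [jacobiTheta₂_term, ← Complex.exp_add]
    ring_nf
  rw [← mul_div_assoc, hshift]
  field_simp [one_sub_cexp_ne_zero h m]
  ring

lemma theta_eq_jacobiTheta₂ (τ ν : ℂ) : theta τ ν = jacobiTheta₂ ν τ :=
  tsum_congr fun m ↦ by rw [jacobiTheta₂_term]; ring_nf

lemma appellK_eq_tsum_jacobiTheta₂_term (ℓ : ℕ) (τ ν μ : ℂ) :
    appellK ℓ τ ν μ = ∑' m : ℤ,
      jacobiTheta₂_term m (ℓ * ν) (ℓ * τ) / (1 - cexp (2 * π * I * (ν + μ + m * τ))) :=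
  tsum_congr fun m ↦ by rw [jacobiTheta₂_term]; ring_nf

lemma appellK_antidiagonal_shift {ℓ : ℕ} (hℓ : 0 < ℓ) {τ ν μ : ℂ} (hτ : 0 < τ.im)
    (h : ∀ m n : ℤ, ν + μ ≠ m * τ + n) (x : ℂ) :
    appellK ℓ τ (ν - x / ℓ * τ) (μ + x / ℓ * τ) =
      cexp (2 * π * I * (ν + μ)) * appellK ℓ τ (ν - (x - 1) / ℓ * τ) (μ + (x - 1) / ℓ * τ) +
        theta (ℓ * τ) (ℓ * ν - x * τ) := by
  have hℓ₀ : (ℓ : ℂ) ≠ 0 := by exact_mod_cast hℓ.ne'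
  have hT : 0 < ((ℓ : ℂ) * τ).im := by simpa using mul_pos (Nat.cast_pos.2 hℓ) hτ
  have harg (y : ℂ) : (ℓ : ℂ) * (ν - y / ℓ * τ) = ℓ * ν - y * τ := by field_simp
  have hsum (y : ℂ) : ν - y / ℓ * τ + (μ + y / ℓ * τ) = ν + μ := by ring
  simp only [appellK_eq_tsum_jacobiTheta₂_term, harg, hsum, theta_eq_jacobiTheta₂]
  rw [show (ℓ : ℂ) * ν - (x - 1) * τ = ℓ * ν - x * τ + τ by ring]
  exact tsum_jacobiTheta₂_term_div_one_sub_cexp hT hτ h _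

section Recurrence

variable {K : Type*} [Field K] {a b : ℤ → K} {c : K}

lemma eq_zpow_mul_add_sum_Icc_of_recurrence (hc : c ≠ 0) (hrec : ∀ n, a n = c * a (n - 1) + b n)
    {n : ℤ} (hn : 0 ≤ n) : a n = c ^ n * a 0 + ∑ r ∈ Icc 1 n, c ^ (n - r) * b r := by
  induction n, hn using Int.leInduction with
  | base => simp
  | succ n hn ih =>
    have hsum : ∑ r ∈ Icc 1 (n + 1), c ^ (n + 1 - r) * b r =
        b (n + 1) + c * ∑ r ∈ Icc 1 n, c ^ (n - r) * b r := by
      rw [← insert_Icc_right_eq_Icc_add_one (by omega), sum_insert (by simp), sub_self, zpow_zero,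
        one_mul, mul_sum]
      refine congrArg _ (sum_congr rfl fun r _ ↦ ?_)
      rw [← mul_assoc, ← zpow_one_add₀ hc]
      ring_nf
    rw [hrec, add_sub_cancel_right, ih, hsum, zpow_add_one₀ hc]
    ring

lemma eq_zpow_mul_sub_sum_Icc_of_recurrence (hc : c ≠ 0) (hrec : ∀ n, a n = c * a (n - 1) + b n)
    {n : ℤ} (hn : n ≤ 0) : a n = c ^ n * a 0 - ∑ r ∈ Icc (n + 1) 0, c ^ (n - r) * b r := by
  induction n, hn using Int.leInductionDown with
  | base => simp
  | pred n hn ih =>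
    have hprev : a (n - 1) = c⁻¹ * (a n - b n) := by
      rw [hrec n]
      field_simp
      ring
    have hsum : ∑ r ∈ Icc n 0, c ^ (n - 1 - r) * b r =
        c⁻¹ * b n + c⁻¹ * ∑ r ∈ Icc (n + 1) 0, c ^ (n - r) * b r := by
      rw [← insert_Icc_add_one_left_eq_Icc hn, sum_insert (by simp), mul_sum, sub_sub_cancel_left,
        zpow_neg_one]
      refine congrArg _ (sum_congr rfl fun r _ ↦ ?_)
      rw [← mul_assoc, ← zpow_neg_one, ← zpow_add₀ hc]
      ring_nf
    rw [hprev, ih, sub_add_cancel, hsum, zpow_sub_one₀ hc]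
    ring

end Recurrence

theorem appellK_antidiagonal_quasiperiodicity (ℓ : ℕ) (hℓ : 0 < ℓ) (τ ν μ : ℂ)
    (hτ : 0 < τ.im) (h : ∀ m n : ℤ, ν + μ ≠ (m : ℂ) * τ + (n : ℂ)) (n : ℤ) :
    (1 ≤ n →
      appellK ℓ τ (ν - (n : ℂ) / (ℓ : ℂ) * τ) (μ + (n : ℂ) / (ℓ : ℂ) * τ) =
        Complex.exp (2 * (π : ℂ) * I * (n : ℂ) * (ν + μ)) * appellK ℓ τ ν μ +
        ∑ r ∈ Finset.Icc (1 : ℤ) n,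
          Complex.exp (2 * (π : ℂ) * I * ((n : ℂ) - (r : ℂ)) * (ν + μ)) *
            theta ((ℓ : ℂ) * τ) ((ℓ : ℂ) * ν - (r : ℂ) * τ)) ∧
    (n ≤ -1 →
      appellK ℓ τ (ν - (n : ℂ) / (ℓ : ℂ) * τ) (μ + (n : ℂ) / (ℓ : ℂ) * τ) =
        Complex.exp (2 * (π : ℂ) * I * (n : ℂ) * (ν + μ)) * appellK ℓ τ ν μ -
        ∑ r ∈ Finset.Icc (n + 1) (0 : ℤ),
          Complex.exp (2 * (π : ℂ) * I * ((n : ℂ) - (r : ℂ)) * (ν + μ)) *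
            theta ((ℓ : ℂ) * τ) ((ℓ : ℂ) * ν - (r : ℂ) * τ)) := by
  set c := cexp (2 * π * I * (ν + μ))
  have hpow (k : ℤ) : cexp (2 * π * I * k * (ν + μ)) = c ^ k := by
    rw [← Complex.exp_int_mul]; ring_nf
  set a : ℤ → ℂ := fun n ↦ appellK ℓ τ (ν - n / ℓ * τ) (μ + n / ℓ * τ)
  have hrec (n : ℤ) : a n = c * a (n - 1) + theta (ℓ * τ) (ℓ * ν - n * τ) := by
    simpa [a] using appellK_antidiagonal_shift hℓ hτ h n
  have ha₀ : a 0 = appellK ℓ τ ν μ := by simp [a]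
  simp only [← Int.cast_sub, hpow, ← ha₀]
  exact ⟨fun hn ↦ eq_zpow_mul_add_sum_Icc_of_recurrence (Complex.exp_ne_zero _) hrec (by omega),
    fun hn ↦ eq_zpow_mul_sub_sum_Icc_of_recurrence (Complex.exp_ne_zero _) hrec (by omega)⟩
end

section
/- Let ℓ and u be positive integers, τ ∈ ℍ, and ν, μ ∈ ℂ with ν+μ ∉ ℤτ + (1/u)ℤ. Then K_ℓ(τ, ν, μ) = Σ_{a=0}^{u−1} Σ_{b=0}^{u−1} e^{iπ a² ℓ τ + 2iπ a b τ + 2iπ(aℓ+b)ν + 2iπ b μ} K_ℓ(u²τ, uν + (ua + bu/ℓ)τ, uμ − (bu/ℓ)τ). -/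
open Complex Real MeasureTheory Finset

/-! Expand `1 / (1 - y)` with `y = e^{2πi(ν+μ+kτ)}` as `(1 + y + ⋯ + y^{u-1}) / (1 - y^u)` and
split the summation index as `k = mu + a` with `0 ≤ a < u`. The `(a, b)`-th piece is then, up to
an exponential factor, the Appell series in `m` at `(u²τ, uν + (ua + bu/ℓ)τ, uμ - (bu/ℓ)τ)`.
The hypothesis on `ν + μ` says exactly that `1 - y^u` never vanishes, and absolute convergence
(the denominators stay away from `0` for all but finitely many `k`) justifies the rearrangements. -/

open Filter

lemma Int.tsum_eq_sum_range_tsum_mul_add {R : Type*} [AddCommGroup R] [UniformSpace R]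
    [IsUniformAddGroup R] [CompleteSpace R] [T0Space R] {f : ℤ → R} (hf : Summable f)
    (N : ℕ) [NeZero N] : ∑' k, f k = ∑ a ∈ Finset.range N, ∑' m : ℤ, f (m * N + a) := by
  let e : ℤ ≃ Fin N × ℤ := (Int.divModEquiv N).trans (Equiv.prodComm _ _)
  rw [← e.symm.tsum_eq f,
    Summable.tsum_prod (f := fun p => f (e.symm p)) (hf.comp_injective e.symm.injective),
    tsum_fintype, ← Fin.sum_univ_eq_sum_range (fun a => ∑' m : ℤ, f (m * N + a))]
  rfl

lemma norm_exp_two_pi_I_mul (z : ℂ) : ‖cexp (2 * π * I * z)‖ = rexp (-2 * π * z.im) := by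
  rw [Complex.norm_exp]
  congr 1
  simp [Complex.mul_re]

lemma eventually_norm_inv_one_sub_exp_le (w t : ℂ) (ht : 0 < t.im) :
    ∀ᶠ k : ℤ in cofinite, ‖(1 - cexp (2 * π * I * (w + k * t)))⁻¹‖ ≤ 2 := by
  set c := -2 * π * t.im
  have hnorm (k : ℤ) : ‖cexp (2 * π * I * (w + k * t))‖ = rexp (-2 * π * w.im + c * k) := by
    rw [norm_exp_two_pi_I_mul]
    congr 1
    simp only [add_im, mul_im, intCast_re, intCast_im, zero_mul, add_zero]
    ring
  have hc : c < 0 := by have := Real.pi_pos; unfold c; nlinarith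
  have htop : ∀ᶠ k : ℤ in atTop, ‖cexp (2 * π * I * (w + k * t))‖ < 1 / 2 := by
    simp_rw [hnorm]
    exact (tendsto_order.1 (Real.tendsto_exp_atBot.comp (tendsto_atBot_add_const_left _ _
      (tendsto_intCast_atTop_atTop.const_mul_atTop_of_neg hc)))).2 _ (by norm_num)
  have hbot : ∀ᶠ k : ℤ in atBot, 2 ≤ ‖cexp (2 * π * I * (w + k * t))‖ := by
    simp_rw [hnorm]
    exact (Real.tendsto_exp_atTop.comp (tendsto_atTop_add_const_left _ _
      ((tendsto_intCast_atBot_iff.2 tendsto_id).const_mul_atBot_of_neg hc))).eventually_ge_atTop 2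
  rw [Int.cofinite_eq]
  refine (eventually_sup.2 ⟨hbot.mono fun k hk => ?_, htop.mono fun k hk => ?_⟩) <;>
  · rw [norm_inv]
    refine inv_le_of_inv_le₀ (by norm_num) ?_
    have := norm_sub_norm_le (1 : ℂ) (cexp (2 * π * I * (w + k * t)))
    have := norm_sub_norm_le (cexp (2 * π * I * (w + k * t))) 1
    rw [norm_sub_rev] at this
    simp only [norm_one] at *
    linarith

lemma summable_exp_div_one_sub_exp (T Z w t : ℂ) (hT : 0 < T.im) (ht : 0 < t.im) :
    Summable fun k : ℤ =>
      cexp (π * I * k ^ 2 * T + 2 * π * I * k * Z) / (1 - cexp (2 * π * I * (w + k * t))) := by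
  have hθ := ((summable_jacobiTheta₂_term_iff Z T).2 hT).norm.mul_left 2
  refine hθ.of_norm_bounded_eventually ((eventually_norm_inv_one_sub_exp_le w t ht).mono
    fun k hk => ?_)
  rw [div_eq_mul_inv, norm_mul, mul_comm, jacobiTheta₂_term, add_comm (2 * π * I * k * Z)]
  exact mul_le_mul_of_nonneg_right hk (norm_nonneg _)

lemma inv_one_sub_eq_geom_sum_mul {K : Type*} [Field K] {y : K} {u : ℕ} (hyu : y ^ u ≠ 1) :
    (1 - y)⁻¹ = (∑ b ∈ range u, y ^ b) * (1 - y ^ u)⁻¹ := by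
  have hy : 1 - y ≠ 0 := sub_ne_zero.2 fun h => hyu (by rw [← h, one_pow])
  have hyu' : 1 - y ^ u ≠ 0 := sub_ne_zero.2 hyu.symm
  field_simp
  linear_combination geom_sum_mul y u

lemma exp_two_pi_I_mul_ne_one {u : ℕ} (hu : u ≠ 0) {τ w : ℂ}
    (h : ∀ m n : ℤ, w ≠ m * τ + n / u) (k : ℤ) : cexp (2 * π * I * (u * (w + k * τ))) ≠ 1 := by
  rw [Ne, Complex.exp_eq_one_iff]
  rintro ⟨n, hn⟩
  have hun : (u : ℂ) * (w + k * τ) = n :=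
    mul_left_cancel₀ two_pi_I_ne_zero (by linear_combination hn)
  apply h (-k) n
  have : (u : ℂ) ≠ 0 := Nat.cast_ne_zero.2 hu
  field_simp
  push_cast
  linear_combination hun

noncomputable def appellKTerm (ℓ : ℕ) (τ ν μ : ℂ) (m : ℤ) : ℂ :=
  cexp (π * I * m ^ 2 * ℓ * τ + 2 * π * I * m * ℓ * ν) / (1 - cexp (2 * π * I * (ν + μ + m * τ)))

lemma appellK_eq_tsum (ℓ : ℕ) (τ ν μ : ℂ) : appellK ℓ τ ν μ = ∑' m, appellKTerm ℓ τ ν μ m := rfl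

noncomputable def appellSplitTerm (ℓ u b : ℕ) (τ ν μ : ℂ) (k : ℤ) : ℂ :=
  cexp (π * I * k ^ 2 * ℓ * τ + 2 * π * I * k * ℓ * ν + 2 * π * I * b * (ν + μ + k * τ)) /
    (1 - cexp (2 * π * I * (u * (ν + μ + k * τ))))

section

variable {ℓ u : ℕ} {τ ν μ : ℂ}

lemma appellKTerm_eq_sum_appellSplitTerm {k : ℤ}
    (hk : cexp (2 * π * I * (u * (ν + μ + k * τ))) ≠ 1) :
    appellKTerm ℓ τ ν μ k = ∑ b ∈ range u, appellSplitTerm ℓ u b τ ν μ k := by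
  have hpow (n : ℕ) : cexp (2 * π * I * (ν + μ + k * τ)) ^ n
      = cexp (2 * π * I * (n * (ν + μ + k * τ))) := by
    rw [← Complex.exp_nat_mul]; ring_nf
  rw [← hpow] at hk
  simp only [appellKTerm, appellSplitTerm, div_eq_mul_inv, inv_one_sub_eq_geom_sum_mul hk,
    mul_sum, sum_mul, ← mul_assoc, hpow, ← Complex.exp_add]

lemma summable_appellSplitTerm (hℓ : 0 < ℓ) (hu : 0 < u) (hτ : 0 < τ.im) (b : ℕ) :
    Summable (appellSplitTerm ℓ u b τ ν μ) := by
  have hT : 0 < ((ℓ : ℂ) * τ).im := by simpa using mul_pos (Nat.cast_pos.2 hℓ) hτ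
  have ht : 0 < ((u : ℂ) * τ).im := by simpa using mul_pos (Nat.cast_pos.2 hu) hτ
  refine ((summable_exp_div_one_sub_exp _ (ℓ * ν + b * τ) (u * (ν + μ)) _ hT ht).mul_left
    (cexp (2 * π * I * b * (ν + μ)))).congr fun k => ?_
  rw [appellSplitTerm, mul_div_assoc', ← Complex.exp_add]
  ring_nf

lemma appellSplitTerm_mul_add (hℓ : ℓ ≠ 0) (a b : ℕ) (m : ℤ) :
    appellSplitTerm ℓ u b τ ν μ (m * u + a) =
      cexp (π * I * a ^ 2 * ℓ * τ + 2 * π * I * a * b * τ + 2 * π * I * (a * ℓ + b) * ν +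
          2 * π * I * b * μ) *
        appellKTerm ℓ (u ^ 2 * τ) (u * ν + (u * a + b * u / ℓ) * τ) (u * μ - b * u / ℓ * τ) m := by
  have : (ℓ : ℂ) ≠ 0 := Nat.cast_ne_zero.2 hℓ
  rw [appellSplitTerm, appellKTerm, mul_div_assoc', ← Complex.exp_add]
  push_cast
  congr 1
  · congr 1
    field_simp
    ring
  · congr 2
    ring

end

theorem appellK_period_multiplication (ℓ u : ℕ) (hℓ : 0 < ℓ) (hu : 0 < u)
    (τ ν μ : ℂ) (hτ : 0 < τ.im)
    (h : ∀ m n : ℤ, ν + μ ≠ (m : ℂ) * τ + (n : ℂ) / (u : ℂ)) :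
    appellK ℓ τ ν μ =
      ∑ a ∈ Finset.range u, ∑ b ∈ Finset.range u,
        Complex.exp ((π : ℂ) * I * (a : ℂ) ^ 2 * ℓ * τ + 2 * (π : ℂ) * I * (a : ℂ) * (b : ℂ) * τ +
            2 * (π : ℂ) * I * ((a : ℂ) * ℓ + (b : ℂ)) * ν + 2 * (π : ℂ) * I * (b : ℂ) * μ) *
          appellK ℓ ((u : ℂ) ^ 2 * τ)
            ((u : ℂ) * ν + ((u : ℂ) * (a : ℂ) + (b : ℂ) * (u : ℂ) / (ℓ : ℂ)) * τ)
            ((u : ℂ) * μ - (b : ℂ) * (u : ℂ) / (ℓ : ℂ) * τ) := by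
  have : NeZero u := ⟨hu.ne'⟩
  calc appellK ℓ τ ν μ = ∑' k : ℤ, ∑ b ∈ range u, appellSplitTerm ℓ u b τ ν μ k :=
        tsum_congr fun k =>
          appellKTerm_eq_sum_appellSplitTerm (exp_two_pi_I_mul_ne_one hu.ne' h k)
    _ = ∑ b ∈ range u, ∑ a ∈ range u, ∑' m : ℤ, appellSplitTerm ℓ u b τ ν μ (m * u + a) := by
        rw [Summable.tsum_finsetSum fun b _ => summable_appellSplitTerm hℓ hu hτ b]
        exact sum_congr rfl fun b _ =>
          Int.tsum_eq_sum_range_tsum_mul_add (summable_appellSplitTerm hℓ hu hτ b) u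
    _ = _ := by
        rw [sum_comm]
        refine sum_congr rfl fun a _ => sum_congr rfl fun b _ => ?_
        rw [appellK_eq_tsum, ← tsum_mul_left]
        exact tsum_congr (appellSplitTerm_mul_add hℓ.ne' a b)
end
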